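/- Let s, t ∈ ℝ² with s ≠ t, and let n ∈ ℝ², n ≠ 0, satisfy ⟪t − s, n⟫ = 0 (n is normal to the line through s and t). Let A, B ⊆ ℝ² be nonempty compact sets with s, t ∈ A and s, t ∈ B, such that ⟪x − s, n⟫ ≥ 0 for all x ∈ A, ⟪x − s, n⟫ ≤ 0 for all x ∈ B (A and B lie in opposite closed half-planes of the line through s and t), and 0 ≤ ⟪x − s, t − s⟫ ≤ ‖t − s‖² for all x ∈ A ∪ B (both sets lie in the slab between the perpendiculars to l(s,t) at s and at t). Then P(A) + P(B) = P(A ∪ B) + 2 · dist s t. (The perimeter identity Σᵢ ℒ(conv(I_i, l(s,t))) = ℒ(conv N₀) + ℒ(l(s,t)) underlying Corollary 2 of the paper, which reduces a multiple-route network to an equivalent single-route network N₀.) -/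

import Mathlib

open MeasureTheory Real Set
open scoped InnerProductSpace

noncomputable def u (θ : ℝ) : EuclideanSpace ℝ (Fin 2) :=
  !₂[Real.cos θ, Real.sin θ]

/-- The (directed) line with normal direction `u θ` at signed distance `ρ`. -/
def G (θ ρ : ℝ) : Set (EuclideanSpace ℝ (Fin 2)) :=
  {x | ⟪x, u θ⟫_ℝ = ρ}

/-- The disaster area: the closed half-plane to the `u θ` side of the line `G θ ρ`. -/
def R (θ ρ : ℝ) : Set (EuclideanSpace ℝ (Fin 2)) :=
  {x | ⟪x, u θ⟫_ℝ ≥ ρ}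

/-- Support integral: integral of the support function over all directions;
equals the perimeter of the convex hull. -/
noncomputable def P (X : Set (EuclideanSpace ℝ (Fin 2))) : ℝ :=
  ∫ θ in (0:ℝ)..(2 * Real.pi), sSup {r : ℝ | ∃ x ∈ X, r = ⟪x, u θ⟫_ℝ}

/-!
Write `h_X w = sup_{x ∈ X} ⟪x, w⟫` for the support function. Every point of `A` has the form
`s + a (t - s) + b n` with `0 ≤ a ≤ 1` and `b ≥ 0`, so for a direction `w` with `⟪w, n⟫ ≤ 0` the
functional `⟪·, w⟫` is at most `max ⟪s, w⟫ ⟪t, w⟫` on `A`; for `⟪w, n⟫ ≥ 0` the same holds on `B`.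
As both sets contain `s` and `t`, `min (h_A w) (h_B w) = max ⟪s, w⟫ ⟪t, w⟫`, while
`max (h_A w) (h_B w) = h_{A ∪ B} w`. Adding the two and integrating over the unit circle gives the
identity, the segment contributing `∫ |⟪t - s, u θ⟫| / 2 = 2 ‖t - s‖`.
-/

open Module (finrank)

section SupportFunction

variable {E : Type*} [NormedAddCommGroup E] [InnerProductSpace ℝ E] {X Y : Set E} {x w : E}

noncomputable def supportFun (X : Set E) (w : E) : ℝ :=
  sSup ((fun x => ⟪x, w⟫_ℝ) '' X)

lemma bddAbove_image_inner (hX : IsCompact X) (w : E) :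
    BddAbove ((fun x => ⟪x, w⟫_ℝ) '' X) :=
  (hX.image (continuous_id.inner continuous_const)).bddAbove

lemma le_supportFun (hX : IsCompact X) (hx : x ∈ X) (w : E) : ⟪x, w⟫_ℝ ≤ supportFun X w :=
  le_csSup (bddAbove_image_inner hX w) (mem_image_of_mem _ hx)

lemma supportFun_le {a : ℝ} (hX : X.Nonempty) (h : ∀ x ∈ X, ⟪x, w⟫_ℝ ≤ a) :
    supportFun X w ≤ a :=
  csSup_le (hX.image _) (forall_mem_image.2 h)

lemma supportFun_union (hX : IsCompact X) (hX' : X.Nonempty) (hY : IsCompact Y)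
    (hY' : Y.Nonempty) (w : E) :
    supportFun (X ∪ Y) w = max (supportFun X w) (supportFun Y w) := by
  rw [supportFun, image_union, csSup_union (bddAbove_image_inner hX w) (hX'.image _)
    (bddAbove_image_inner hY w) (hY'.image _)]
  rfl

lemma continuous_supportFun (hX : IsCompact X) : Continuous (supportFun X) :=
  hX.continuous_sSup (f := fun w x => ⟪x, w⟫_ℝ) (continuous_snd.inner continuous_fst)

end SupportFunction

section Plane

variable {E : Type*} [NormedAddCommGroup E] [InnerProductSpace ℝ E] {s t n : E}

lemma exists_eq_smul_add_smul_of_inner_eq_zero (hE : finrank ℝ E = 2) {v : E}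
    (hv : v ≠ 0) (hn : n ≠ 0) (hvn : ⟪v, n⟫_ℝ = 0) (w : E) : ∃ α β : ℝ, α • v + β • n = w := by
  have hli : LinearIndependent ℝ ![v, n] :=
    linearIndependent_of_ne_zero_of_inner_eq_zero (fun i => by fin_cases i <;> simpa)
      (fun i j hij => by fin_cases i <;> fin_cases j <;> simp_all [real_inner_comm])
  have hw : w ∈ Submodule.span ℝ (range ![v, n]) := by
    rw [hli.span_eq_top_of_card_eq_finrank (by simp [hE])]
    trivial
  obtain ⟨c, hc⟩ := (Submodule.mem_span_range_iff_exists_fun ℝ).1 hw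
  exact ⟨c 0, c 1, by simpa [Fin.sum_univ_two] using hc⟩

lemma inner_le_max_of_mem_halfStrip (hE : finrank ℝ E = 2) {x w : E} (hst : s ≠ t)
    (hn : n ≠ 0) (hperp : ⟪t - s, n⟫_ℝ = 0) (hx₀ : 0 ≤ ⟪x - s, t - s⟫_ℝ)
    (hx₁ : ⟪x - s, t - s⟫_ℝ ≤ ‖t - s‖ ^ 2) (hxn : 0 ≤ ⟪x - s, n⟫_ℝ) (hwn : ⟪w, n⟫_ℝ ≤ 0) :
    ⟪x, w⟫_ℝ ≤ max ⟪s, w⟫_ℝ ⟪t, w⟫_ℝ := by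
  obtain ⟨α, β, hw⟩ :=
    exists_eq_smul_add_smul_of_inner_eq_zero hE (sub_ne_zero.2 hst.symm) hn hperp w
  have hwn' : ⟪w, n⟫_ℝ = β * ‖n‖ ^ 2 := by
    rw [← hw, inner_add_left, real_inner_smul_left, real_inner_smul_left, hperp,
      real_inner_self_eq_norm_sq, mul_zero, zero_add]
  have hβ : β ≤ 0 := nonpos_of_mul_nonpos_left (hwn' ▸ hwn) (by positivity)
  have hxw : ⟪x - s, w⟫_ℝ = α * ⟪x - s, t - s⟫_ℝ + β * ⟪x - s, n⟫_ℝ := by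
    rw [← hw, inner_add_right, real_inner_smul_right, real_inner_smul_right]
  have htw : ⟪t - s, w⟫_ℝ = α * ‖t - s‖ ^ 2 := by
    rw [← hw, inner_add_right, real_inner_smul_right, real_inner_smul_right, hperp,
      real_inner_self_eq_norm_sq, mul_zero, add_zero]
  rw [inner_sub_left] at hxw htw
  have hβx := mul_nonpos_of_nonpos_of_nonneg hβ hxn
  rcases le_total 0 α with hα | hα
  · exact le_max_of_le_right (by nlinarith)
  · exact le_max_of_le_left (by nlinarith)

lemma supportFun_le_max_inner (hE : finrank ℝ E = 2) {X : Set E} {w : E} (hst : s ≠ t)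
    (hn : n ≠ 0) (hperp : ⟪t - s, n⟫_ℝ = 0) (hX : X.Nonempty)
    (hside : ∀ x ∈ X, 0 ≤ ⟪x - s, n⟫_ℝ)
    (hstrip : ∀ x ∈ X, 0 ≤ ⟪x - s, t - s⟫_ℝ ∧ ⟪x - s, t - s⟫_ℝ ≤ ‖t - s‖ ^ 2)
    (hwn : ⟪w, n⟫_ℝ ≤ 0) : supportFun X w ≤ max ⟪s, w⟫_ℝ ⟪t, w⟫_ℝ :=
  supportFun_le hX fun x hx =>
    inner_le_max_of_mem_halfStrip hE hst hn hperp (hstrip x hx).1 (hstrip x hx).2 (hside x hx) hwn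

lemma min_supportFun_eq_max_inner (hE : finrank ℝ E = 2) {A B : Set E} (hst : s ≠ t)
    (hn : n ≠ 0) (hperp : ⟪t - s, n⟫_ℝ = 0) (hAc : IsCompact A) (hBc : IsCompact B)
    (hsA : s ∈ A) (htA : t ∈ A) (hsB : s ∈ B) (htB : t ∈ B)
    (hAside : ∀ x ∈ A, 0 ≤ ⟪x - s, n⟫_ℝ) (hBside : ∀ x ∈ B, ⟪x - s, n⟫_ℝ ≤ 0)
    (hstrip : ∀ x ∈ A ∪ B, 0 ≤ ⟪x - s, t - s⟫_ℝ ∧ ⟪x - s, t - s⟫_ℝ ≤ ‖t - s‖ ^ 2) (w : E) :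
    min (supportFun A w) (supportFun B w) = max ⟪s, w⟫_ℝ ⟪t, w⟫_ℝ := by
  refine le_antisymm ?_ (le_min (max_le (le_supportFun hAc hsA w) (le_supportFun hAc htA w))
    (max_le (le_supportFun hBc hsB w) (le_supportFun hBc htB w)))
  rcases le_total ⟪w, n⟫_ℝ 0 with hwn | hwn
  · exact min_le_of_left_le (supportFun_le_max_inner hE hst hn hperp ⟨s, hsA⟩ hAside
      (fun x hx => hstrip x (.inl hx)) hwn)
  · have hBside' : ∀ x ∈ B, 0 ≤ ⟪x - s, -n⟫_ℝ := fun x hx => by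
      rw [inner_neg_right, neg_nonneg]
      exact hBside x hx
    exact min_le_of_right_le (supportFun_le_max_inner hE hst (neg_ne_zero.2 hn)
      (by rw [inner_neg_right, hperp, neg_zero]) ⟨s, hsB⟩ hBside'
      (fun x hx => hstrip x (.inr hx)) (by rwa [inner_neg_right, neg_nonpos]))

end Plane

section Circle

lemma inner_u (x : EuclideanSpace ℝ (Fin 2)) (θ : ℝ) :
    ⟪x, u θ⟫_ℝ = x 0 * cos θ + x 1 * sin θ := by
  simp [u, PiLp.inner_apply, Fin.sum_univ_two, mul_comm]

@[fun_prop]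
lemma continuous_u : Continuous u := by
  unfold u
  fun_prop

lemma integral_inner_u (x : EuclideanSpace ℝ (Fin 2)) :
    ∫ θ in (0:ℝ)..2 * π, ⟪x, u θ⟫_ℝ = 0 := by
  simp only [inner_u]
  rw [intervalIntegral.integral_add (Continuous.intervalIntegrable (by fun_prop) _ _)
    (Continuous.intervalIntegrable (by fun_prop) _ _)]
  simp

lemma integral_abs_cos_sub (φ : ℝ) : ∫ θ in (0:ℝ)..2 * π, |cos (θ - φ)| = 4 := by
  have hper : Function.Periodic (fun θ => |cos θ|) π := fun θ => by simp [cos_add_pi]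
  have hint : ∀ a b, IntervalIntegrable (fun θ => |cos θ|) volume a b :=
    fun a b => (by fun_prop : Continuous fun θ => |cos θ|).intervalIntegrable a b
  have hhalf : ∫ θ in -(π / 2)..-(π / 2) + π, |cos θ| = 2 := by
    rw [intervalIntegral.integral_congr (g := cos), integral_cos,
      show -(π / 2) + π = π / 2 by ring, sin_neg, sin_pi_div_two]
    · norm_num
    · intro θ hθ
      rw [uIcc_of_le (by linarith [pi_pos])] at hθ
      exact abs_of_nonneg (cos_nonneg_of_mem_Icc ⟨hθ.1, by linarith [hθ.2]⟩)
  calc ∫ θ in (0:ℝ)..2 * π, |cos (θ - φ)| = ∫ θ in -φ..-φ + (2:ℤ) • π, |cos θ| := by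
        rw [intervalIntegral.integral_comp_sub_right (fun θ => |cos θ|)]
        rw [zero_sub, zsmul_eq_mul, Int.cast_ofNat, neg_add_eq_sub]
    _ = 2 * ∫ θ in -(π / 2)..-(π / 2) + π, |cos θ| := by
        rw [hper.intervalIntegral_add_zsmul_eq 2 (-φ) hint,
          hper.intervalIntegral_add_eq (-φ) (-(π / 2)), zsmul_eq_mul, Int.cast_ofNat]
    _ = 4 := by rw [hhalf]; norm_num

lemma exists_inner_u_eq_norm_mul_cos (x : EuclideanSpace ℝ (Fin 2)) :
    ∃ φ, ∀ θ, ⟪x, u θ⟫_ℝ = ‖x‖ * cos (θ - φ) := by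
  let z : ℂ := ⟨x 0, x 1⟩
  have hz : ‖z‖ = ‖x‖ := by
    rw [EuclideanSpace.norm_eq, Fin.sum_univ_two, Complex.norm_def, Complex.normSq_mk]
    simp [sq]
  refine ⟨Complex.arg z, fun θ => ?_⟩
  have hre : ‖x‖ * cos (Complex.arg z) = x 0 := hz ▸ Complex.norm_mul_cos_arg z
  have him : ‖x‖ * sin (Complex.arg z) = x 1 := hz ▸ Complex.norm_mul_sin_arg z
  rw [inner_u, cos_sub]
  linear_combination (-cos θ) * hre - sin θ * him

lemma integral_abs_inner_u (x : EuclideanSpace ℝ (Fin 2)) :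
    ∫ θ in (0:ℝ)..2 * π, |⟪x, u θ⟫_ℝ| = 4 * ‖x‖ := by
  obtain ⟨φ, hφ⟩ := exists_inner_u_eq_norm_mul_cos x
  simp only [hφ, abs_mul, abs_norm, intervalIntegral.integral_const_mul, integral_abs_cos_sub]
  ring

lemma integral_max_inner_u (s t : EuclideanSpace ℝ (Fin 2)) :
    ∫ θ in (0:ℝ)..2 * π, max ⟪s, u θ⟫_ℝ ⟪t, u θ⟫_ℝ = 2 * dist s t := by
  have hmax : ∀ θ, max ⟪s, u θ⟫_ℝ ⟪t, u θ⟫_ℝ =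
      ⟪(1 / 2 : ℝ) • (s + t), u θ⟫_ℝ + 1 / 2 * |⟪t - s, u θ⟫_ℝ| := fun θ => by
    rw [real_inner_smul_left, inner_add_left, inner_sub_left]
    linarith [min_add_max ⟪s, u θ⟫_ℝ ⟪t, u θ⟫_ℝ, max_sub_min_eq_abs ⟪s, u θ⟫_ℝ ⟪t, u θ⟫_ℝ]
  simp only [hmax]
  rw [intervalIntegral.integral_add (Continuous.intervalIntegrable (by fun_prop) _ _)
      (Continuous.intervalIntegrable (by fun_prop) _ _), integral_inner_u,
    intervalIntegral.integral_const_mul, integral_abs_inner_u, dist_eq_norm']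
  ring

lemma P_eq_integral_supportFun (X : Set (EuclideanSpace ℝ (Fin 2))) :
    P X = ∫ θ in (0:ℝ)..2 * π, supportFun X (u θ) := by
  unfold P supportFun
  congr 1 with θ
  congr 1 with r
  simp [eq_comm]

end Circle

theorem stmt_8_general (s t n : EuclideanSpace ℝ (Fin 2)) (hst : s ≠ t) (hn : n ≠ 0)
    (hperp : ⟪t - s, n⟫_ℝ = 0)
    (A B : Set (EuclideanSpace ℝ (Fin 2)))
    (hAc : IsCompact A) (hBc : IsCompact B)
    (hsA : s ∈ A) (htA : t ∈ A) (hsB : s ∈ B) (htB : t ∈ B)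
    (hAside : ∀ x ∈ A, 0 ≤ ⟪x - s, n⟫_ℝ)
    (hBside : ∀ x ∈ B, ⟪x - s, n⟫_ℝ ≤ 0)
    (hslab : ∀ x ∈ A ∪ B, 0 ≤ ⟪x - s, t - s⟫_ℝ ∧ ⟪x - s, t - s⟫_ℝ ≤ ‖t - s‖ ^ 2) :
    P A + P B = P (A ∪ B) + 2 * dist s t := by
  have hpoint : ∀ θ, supportFun A (u θ) + supportFun B (u θ) =
      supportFun (A ∪ B) (u θ) + max ⟪s, u θ⟫_ℝ ⟪t, u θ⟫_ℝ := fun θ => by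
    rw [supportFun_union hAc ⟨s, hsA⟩ hBc ⟨s, hsB⟩, ← min_supportFun_eq_max_inner
      finrank_euclideanSpace_fin hst hn hperp hAc hBc hsA htA hsB htB hAside hBside hslab,
      add_comm (max _ _), min_add_max]
  have hint : ∀ X : Set (EuclideanSpace ℝ (Fin 2)), IsCompact X →
      IntervalIntegrable (fun θ => supportFun X (u θ)) volume 0 (2 * π) := fun X hX =>
    ((continuous_supportFun hX).comp continuous_u).intervalIntegrable _ _
  rw [P_eq_integral_supportFun, P_eq_integral_supportFun, P_eq_integral_supportFun,
    ← integral_max_inner_u, ← intervalIntegral.integral_add (hint A hAc) (hint B hBc),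
    ← intervalIntegral.integral_add (hint _ (hAc.union hBc))
      (Continuous.intervalIntegrable (by fun_prop) _ _)]
  simp only [hpoint]

/-- The perimeter identity `Σᵢ ℒ(conv(I_i, l(s,t))) = ℒ(conv N₀) + ℒ(l(s,t))`
underlying Corollary 2 of the paper: if `A` and `B` both contain `s` and `t`, lie in
opposite closed half-planes of the line through `s` and `t`, and lie in the slab between
the perpendiculars to `l(s,t)` at `s` and at `t`, then
`P(A) + P(B) = P(A ∪ B) + 2 · dist s t`. -/
theorem stmt_8 (s t n : EuclideanSpace ℝ (Fin 2)) (hst : s ≠ t) (hn : n ≠ 0)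
    (hperp : ⟪t - s, n⟫_ℝ = 0)
    (A B : Set (EuclideanSpace ℝ (Fin 2)))
    (hAc : IsCompact A) (hAne : A.Nonempty) (hBc : IsCompact B) (hBne : B.Nonempty)
    (hsA : s ∈ A) (htA : t ∈ A) (hsB : s ∈ B) (htB : t ∈ B)
    (hAside : ∀ x ∈ A, 0 ≤ ⟪x - s, n⟫_ℝ)
    (hBside : ∀ x ∈ B, ⟪x - s, n⟫_ℝ ≤ 0)
    (hslab : ∀ x ∈ A ∪ B, 0 ≤ ⟪x - s, t - s⟫_ℝ ∧ ⟪x - s, t - s⟫_ℝ ≤ ‖t - s‖ ^ 2) :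
    P A + P B = P (A ∪ B) + 2 * dist s t :=
  stmt_8_general s t n hst hn hperp A B hAc hBc hsA htA hsB htB hAside hBside hslab
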